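/- The binary-model steady state is a genuine probability distribution: for all real a, b with 0 < a < b, all real ν > 0 and θ with 0 < θ ≤ 1, the quantities P_{0,n} and P_{1,n} are strictly positive for every n ∈ ℕ. -/

import Mathlib

open scoped BigOperators

/-- Pochhammer symbol `(a)ₙ = a(a+1)⋯(a+n−1)`, `(a)₀ = 1`. -/
noncomputable def poch (a : ℝ) (n : ℕ) : ℝ := ∏ k ∈ Finset.range n, (a + k)

/-- Kummer's confluent hypergeometric function `M(a,b,z)`. -/
noncomputable def kummerM (a b z : ℝ) : ℝ :=
  ∑' k : ℕ, poch a k / poch b k * z ^ k / (Nat.factorial k : ℝ)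

/-- Steady-state probability `P_{0,n}` of the binary gene model. -/
noncomputable def P0 (a b ν θ : ℝ) (n : ℕ) : ℝ :=
  (b - a) / (kummerM a b (ν * (1 - θ)) * b) * (ν ^ n / (Nat.factorial n : ℝ)) *
    (poch a n / poch (1 + b) n) * kummerM (a + n) (1 + b + n) (-(ν * θ))

/-- Steady-state probability `P_{1,n}` of the binary gene model. -/
noncomputable def P1 (a b ν θ : ℝ) (n : ℕ) : ℝ :=
  a / (kummerM a b (ν * (1 - θ)) * b) * (ν ^ n / (Nat.factorial n : ℝ)) *
    (poch (1 + a) n / poch (1 + b) n) * kummerM (1 + a + n) (1 + b + n) (-(ν * θ))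

namespace BinaryAux

/-- Falling factorial `x(x−1)⋯(x−n+1)`. -/
noncomputable def dpoch (x : ℝ) (n : ℕ) : ℝ := ∏ k ∈ Finset.range n, (x - k)

lemma poch_succ (a : ℝ) (n : ℕ) : poch a (n + 1) = poch a n * (a + n) :=
  Finset.prod_range_succ _ _

lemma dpoch_succ (x : ℝ) (n : ℕ) : dpoch x (n + 1) = dpoch x n * (x - n) :=
  Finset.prod_range_succ _ _

lemma poch_pos {a : ℝ} (ha : 0 < a) (n : ℕ) : 0 < poch a n :=
  Finset.prod_pos fun k _ => by positivity

lemma poch_add (b : ℝ) (k m : ℕ) : poch b (k + m) = poch b k * poch (b + k) m := by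
  unfold poch
  rw [Finset.prod_range_add]
  congr 1
  refine Finset.prod_congr rfl fun i _ => ?_
  push_cast
  ring

lemma dpoch_neg (a : ℝ) (k : ℕ) : dpoch (-a) k = (-1) ^ k * poch a k := by
  induction k with
  | zero => simp [dpoch, poch]
  | succ k ih =>
    rw [dpoch_succ, poch_succ, ih, pow_succ]
    ring

lemma dpoch_eq_poch (c : ℝ) (m : ℕ) : dpoch (c + m - 1) m = poch c m := by
  unfold dpoch poch
  rw [← Finset.prod_range_reflect (fun i => c + i) m]
  refine Finset.prod_congr rfl fun i hi => ?_
  have hi' : i < m := Finset.mem_range.mp hi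
  have h1 : 1 + i ≤ m := by omega
  have : ((m - 1 - i : ℕ) : ℝ) = (m : ℝ) - (1 + i) := by
    rw [Nat.sub_sub, Nat.cast_sub h1]
    push_cast; ring
  simp only [this]
  ring

/-- Falling-factorial Vandermonde identity. -/
lemma dvand (x y : ℝ) : ∀ n : ℕ,
    ∑ k ∈ Finset.range (n + 1),
      (n.choose k : ℝ) * dpoch x k * dpoch y (n - k) = dpoch (x + y) n := by
  intro n
  induction n with
  | zero => simp [dpoch]
  | succ n ih =>
    have key : ∀ k ∈ Finset.range (n + 1),
        (n.choose k : ℝ) * dpoch x (k + 1) * dpoch y (n - k)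
          + (n.choose k : ℝ) * dpoch x k * dpoch y (n + 1 - k)
        = (n.choose k : ℝ) * dpoch x k * dpoch y (n - k) * (x + y - n) := by
      intro k hk
      have hk' : k ≤ n := Nat.lt_succ_iff.mp (Finset.mem_range.mp hk)
      have h1 : n + 1 - k = (n - k) + 1 := by omega
      have h2 : ((n - k : ℕ) : ℝ) = (n : ℝ) - k := by
        rw [Nat.cast_sub hk']
      rw [h1, dpoch_succ, dpoch_succ, h2]
      ring
    have expand : ∑ k ∈ Finset.range (n + 2),
        ((n + 1).choose k : ℝ) * dpoch x k * dpoch y (n + 1 - k)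
        = (∑ k ∈ Finset.range (n + 1),
            (n.choose k : ℝ) * dpoch x (k + 1) * dpoch y (n - k))
          + ∑ k ∈ Finset.range (n + 1),
            (n.choose k : ℝ) * dpoch x k * dpoch y (n + 1 - k) := by
      rw [Finset.sum_range_succ' (fun k => ((n + 1).choose k : ℝ) * dpoch x k
        * dpoch y (n + 1 - k)) (n + 1)]
      have hA : ∀ k ∈ Finset.range (n + 1),
          ((n + 1).choose (k + 1) : ℝ) * dpoch x (k + 1) * dpoch y (n + 1 - (k + 1))
          = (n.choose k : ℝ) * dpoch x (k + 1) * dpoch y (n - k)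
            + (n.choose (k + 1) : ℝ) * dpoch x (k + 1) * dpoch y (n - k) := by
        intro k hk
        have h1 : n + 1 - (k + 1) = n - k := by omega
        rw [h1, Nat.choose_succ_succ']
        push_cast
        ring
      rw [Finset.sum_congr rfl hA, Finset.sum_add_distrib]
      have hB : (∑ k ∈ Finset.range (n + 1),
          (n.choose (k + 1) : ℝ) * dpoch x (k + 1) * dpoch y (n - k))
          + ((n + 1).choose 0 : ℝ) * dpoch x 0 * dpoch y (n + 1 - 0)
          = ∑ k ∈ Finset.range (n + 1),
            (n.choose k : ℝ) * dpoch x k * dpoch y (n + 1 - k) := by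
        have := Finset.sum_range_succ' (fun k => (n.choose k : ℝ) * dpoch x k
          * dpoch y (n + 1 - k)) (n + 1)
        rw [Finset.sum_range_succ (fun k => (n.choose k : ℝ) * dpoch x k
          * dpoch y (n + 1 - k)) (n + 1)] at this
        simp only [Nat.choose_succ_self, Nat.cast_zero, zero_mul, add_zero] at this
        rw [this]
        simp [Nat.succ_sub_succ_eq_sub]
      rw [add_assoc, hB]
    rw [expand, ← Finset.sum_add_distrib, Finset.sum_congr rfl key,
      ← Finset.sum_mul, ih, dpoch_succ]

/-- Chu–Vandermonde for Pochhammer symbols. -/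
lemma vand (a b : ℝ) (n : ℕ) :
    ∑ k ∈ Finset.range (n + 1),
      (n.choose k : ℝ) * (-1) ^ k * poch a k * poch (b + k) (n - k)
    = poch (b - a) n := by
  have h := dvand (-a) (b + n - 1) n
  have hxy : (-a) + (b + n - 1) = (b - a) + n - 1 := by ring
  rw [hxy, dpoch_eq_poch] at h
  rw [← h]
  refine Finset.sum_congr rfl fun k hk => ?_
  have hk' : k ≤ n := Nat.lt_succ_iff.mp (Finset.mem_range.mp hk)
  rw [dpoch_neg]
  have hcast : (b : ℝ) + n - 1 = (b + k) + ((n - k : ℕ) : ℝ) - 1 := by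
    rw [Nat.cast_sub hk']; ring
  rw [hcast, dpoch_eq_poch]
  ring

lemma kummer_summable_norm {a b : ℝ} (ha : 0 < a) (hab : a ≤ b) (z : ℝ) :
    Summable fun k : ℕ => ‖poch a k / poch b k * z ^ k / (Nat.factorial k : ℝ)‖ := by
  have hb : 0 < b := lt_of_lt_of_le ha hab
  refine Summable.of_nonneg_of_le (fun k => norm_nonneg _)
    (fun k => ?_) (Real.summable_pow_div_factorial |z|)
  have h1 := poch_pos ha k
  have h2 := poch_pos hb k
  have hle : poch a k ≤ poch b k := by
    refine Finset.prod_le_prod (fun i _ => by positivity) (fun i _ => by linarith)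
  have hfac : (0 : ℝ) < (Nat.factorial k : ℝ) := by positivity
  rw [Real.norm_eq_abs, abs_div, abs_mul, abs_div, abs_pow,
    abs_of_pos h1, abs_of_pos h2, abs_of_pos hfac]
  have hr : poch a k / poch b k ≤ 1 := (div_le_one h2).mpr hle
  have hz : (0:ℝ) ≤ |z| ^ k / (Nat.factorial k : ℝ) := by positivity
  calc poch a k / poch b k * |z| ^ k / (Nat.factorial k : ℝ)
      = (poch a k / poch b k) * (|z| ^ k / (Nat.factorial k : ℝ)) := by ring
    _ ≤ 1 * (|z| ^ k / (Nat.factorial k : ℝ)) := by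
        exact mul_le_mul_of_nonneg_right hr hz
    _ = |z| ^ k / (Nat.factorial k : ℝ) := one_mul _

lemma kummer_summable {a b : ℝ} (ha : 0 < a) (hab : a ≤ b) (z : ℝ) :
    Summable fun k : ℕ => poch a k / poch b k * z ^ k / (Nat.factorial k : ℝ) :=
  (kummer_summable_norm ha hab z).of_norm

lemma kummerM_pos_of_nonneg {a b z : ℝ} (ha : 0 < a) (hab : a ≤ b) (hz : 0 ≤ z) :
    0 < kummerM a b z := by
  have hb : 0 < b := lt_of_lt_of_le ha hab
  refine Summable.tsum_pos (kummer_summable ha hab z) (fun k => ?_) 0 ?_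
  · have h1 := poch_pos ha k
    have h2 := poch_pos hb k
    have : (0:ℝ) < (Nat.factorial k : ℝ) := by positivity
    positivity
  · simp [poch]

lemma step_lemma (b c x : ℝ) (hb : 0 < b) (k m : ℕ) :
    poch c k / poch b k * x ^ k / (Nat.factorial k : ℝ)
      * ((-x) ^ m / (Nat.factorial m : ℝ))
    = ((k + m).choose k : ℝ) * (-1) ^ k * poch c k * poch (b + k) m
      * ((-1) ^ (k + m) * x ^ (k + m)
        / ((Nat.factorial (k + m) : ℝ) * poch b (k + m))) := by
  have h1 := poch_pos hb k
  have h2 : (0:ℝ) < poch (b + k) m := poch_pos (by positivity) m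
  have hfk : ((Nat.factorial k : ℝ)) ≠ 0 := by positivity
  have hfm : ((Nat.factorial m : ℝ)) ≠ 0 := by positivity
  have hfkm : ((Nat.factorial (k + m) : ℝ)) ≠ 0 := by positivity
  rw [Nat.cast_choose ℝ (Nat.le_add_right k m), poch_add b k m,
    pow_add, pow_add, neg_pow x m]
  simp only [Nat.add_sub_cancel_left]
  rcases Nat.even_or_odd k with hpar | hpar
  · simp only [hpar.neg_one_pow]
    field_simp
  · simp only [hpar.neg_one_pow]
    field_simp

/-- Kummer transformation `M(a,b,−x) = e^{−x} M(b−a,b,x)`. -/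
lemma kummer_transform {a b : ℝ} (ha : 0 < a) (hab : a < b) {x : ℝ} (hx : 0 ≤ x) :
    kummerM a b (-x) = Real.exp (-x) * kummerM (b - a) b x := by
  have hb : 0 < b := ha.trans hab
  have hc : 0 < b - a := sub_pos.mpr hab
  have hcb : b - a ≤ b := by linarith
  have hexp : Real.exp (-x) = ∑' j : ℕ, (-x) ^ j / (Nat.factorial j : ℝ) := by
    rw [Real.exp_eq_exp_ℝ, NormedSpace.exp_eq_tsum_div]
  have hgnorm : Summable fun j : ℕ => ‖(-x) ^ j / (Nat.factorial j : ℝ)‖ := by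
    refine Summable.congr (Real.summable_pow_div_factorial |x|) fun j => ?_
    rw [Real.norm_eq_abs, abs_div, abs_pow, abs_neg, abs_of_nonneg
      (by positivity : (0:ℝ) ≤ (Nat.factorial j : ℝ))]
  have hfnorm := kummer_summable_norm hc hcb x
  rw [hexp, mul_comm]
  unfold kummerM
  rw [tsum_mul_tsum_eq_tsum_sum_range_of_summable_norm hfnorm hgnorm]
  refine tsum_congr fun n => ?_
  have hstep : ∀ k ∈ Finset.range (n + 1),
      poch (b - a) k / poch b k * x ^ k / (Nat.factorial k : ℝ)
        * ((-x) ^ (n - k) / (Nat.factorial (n - k) : ℝ))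
      = (n.choose k : ℝ) * (-1) ^ k * poch (b - a) k * poch (b + k) (n - k)
        * ((-1) ^ n * x ^ n / ((Nat.factorial n : ℝ) * poch b n)) := by
    intro k hk
    have hk' : k ≤ n := Nat.lt_succ_iff.mp (Finset.mem_range.mp hk)
    have := step_lemma b (b - a) x hb k (n - k)
    rwa [Nat.add_sub_cancel' hk'] at this
  rw [Finset.sum_congr rfl hstep, ← Finset.sum_mul, vand (b - a) b n]
  have : b - (b - a) = a := by ring
  rw [this]
  have hpn := poch_pos hb n
  have hfn : ((Nat.factorial n : ℝ)) ≠ 0 := by positivity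
  rw [neg_pow x n]
  ring

lemma kummerM_neg_pos {a b : ℝ} (ha : 0 < a) (hab : a < b) {x : ℝ} (hx : 0 ≤ x) :
    0 < kummerM a b (-x) := by
  rw [kummer_transform ha hab hx]
  have hc : 0 < b - a := sub_pos.mpr hab
  exact mul_pos (Real.exp_pos _) (kummerM_pos_of_nonneg hc (by linarith) hx)

end BinaryAux

open BinaryAux in
/-- The binary-model steady-state probabilities are strictly positive. -/
theorem binary_model_probs_pos (a b ν θ : ℝ) (ha : 0 < a) (hab : a < b)
    (hν : 0 < ν) (hθ0 : 0 < θ) (hθ1 : θ ≤ 1) (n : ℕ) :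
    0 < P0 a b ν θ n ∧ 0 < P1 a b ν θ n := by
  have hb : 0 < b := ha.trans hab
  have hx : 0 ≤ ν * θ := by positivity
  have hz : 0 ≤ ν * (1 - θ) := by
    have : 0 ≤ 1 - θ := by linarith
    positivity
  have hC : 0 < kummerM a b (ν * (1 - θ)) :=
    kummerM_pos_of_nonneg ha hab.le hz
  have hfac : (0:ℝ) < (Nat.factorial n : ℝ) := by positivity
  have hpa := poch_pos ha n
  have hpa1 := poch_pos (by linarith : (0:ℝ) < 1 + a) n
  have hpb1 := poch_pos (by linarith : (0:ℝ) < 1 + b) n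
  have hM0 : 0 < kummerM (a + n) (1 + b + n) (-(ν * θ)) := by
    have := kummerM_neg_pos (a := a + n) (b := 1 + b + n)
      (by positivity) (by linarith) hx
    simpa using this
  have hM1 : 0 < kummerM (1 + a + n) (1 + b + n) (-(ν * θ)) := by
    have := kummerM_neg_pos (a := 1 + a + n) (b := 1 + b + n)
      (by positivity) (by linarith) hx
    simpa using this
  constructor
  · unfold P0
    have hba : 0 < b - a := sub_pos.mpr hab
    positivity
  · unfold P1
    positivity
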